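/- arXiv:0904.2188 — 5 statements merged into one kernel-verified Lean document; each statement's English description precedes it below -/
import Mathlib

section
/- If f, h : ℝ → ℝ are smooth and satisfy −f''' = z·ρ·f and −h''' = λ·ρ·h on [0,1] for a continuous ρ and constants z, λ, then −(B(f,h)(1) − B(f,h)(0)) = (z + λ)·∫₀¹ f(ξ)h(ξ)ρ(ξ) dξ, where B(f,h) = f''h − f'h' + fh''. -/
open scoped ContDiff


theorem concomitant_identity_two_solutions (f h ρ : ℝ → ℝ) (z lam : ℝ)
    (hf : ContDiff ℝ (⊤ : ℕ∞) f) (hh : ContDiff ℝ (⊤ : ℕ∞) h) (hρ : Continuous ρ)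
    (hfe : ∀ ξ ∈ Set.Icc (0:ℝ) 1, -(deriv (deriv (deriv f)) ξ) = z * ρ ξ * f ξ)
    (hhe : ∀ ξ ∈ Set.Icc (0:ℝ) 1, -(deriv (deriv (deriv h)) ξ) = lam * ρ ξ * h ξ)
    (B : (ℝ → ℝ) → (ℝ → ℝ) → ℝ → ℝ)
    (hB : ∀ u v ξ, B u v ξ = deriv (deriv u) ξ * v ξ - deriv u ξ * deriv v ξ
      + u ξ * deriv (deriv v) ξ) :
    -(B f h 1 - B f h 0) = (z + lam) * ∫ ξ in (0:ℝ)..1, f ξ * h ξ * ρ ξ := by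
  have hf' : ContDiff ℝ ∞ f := hf.of_le (by simp)
  have hh' : ContDiff ℝ ∞ h := hh.of_le (by simp)
  have hf1 : ContDiff ℝ ∞ (deriv f) := (contDiff_infty_iff_deriv.mp hf').2
  have hf2 : ContDiff ℝ ∞ (deriv (deriv f)) := (contDiff_infty_iff_deriv.mp hf1).2
  have hh1 : ContDiff ℝ ∞ (deriv h) := (contDiff_infty_iff_deriv.mp hh').2
  have hh2 : ContDiff ℝ ∞ (deriv (deriv h)) := (contDiff_infty_iff_deriv.mp hh1).2
  have Df : ∀ (u : ℝ → ℝ), ContDiff ℝ ∞ u → ∀ x : ℝ, HasDerivAt u (deriv u x) x := by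
    intro u hu x
    exact (hu.differentiable (by norm_num) x).hasDerivAt
  set g' : ℝ → ℝ := fun x => -((z + lam) * (f x * h x * ρ x)) with hg'
  have key : ∀ x ∈ Set.uIcc (0:ℝ) 1, HasDerivAt (B f h) (g' x) x := by
    intro x hx
    rw [Set.uIcc_of_le (by norm_num)] at hx
    have hd : HasDerivAt (fun ξ => deriv (deriv f) ξ * h ξ - deriv f ξ * deriv h ξ
        + f ξ * deriv (deriv h) ξ)
        (deriv (deriv (deriv f)) x * h x + deriv (deriv f) x * deriv h x
          - (deriv (deriv f) x * deriv h x + deriv f x * deriv (deriv h) x)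
          + (deriv f x * deriv (deriv h) x + f x * deriv (deriv (deriv h)) x)) x := by
      exact (((Df _ hf2 x).mul (Df _ hh' x)).sub ((Df _ hf1 x).mul (Df _ hh1 x))).add
        ((Df _ hf' x).mul (Df _ hh2 x))
    have heq : (fun ξ => deriv (deriv f) ξ * h ξ - deriv f ξ * deriv h ξ
        + f ξ * deriv (deriv h) ξ) = B f h := by
      funext ξ; rw [hB]
    rw [heq] at hd
    convert hd using 1
    have e1 := hfe x hx
    have e2 := hhe x hx
    have e1' : deriv (deriv (deriv f)) x = -(z * ρ x * f x) := by linarith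
    have e2' : deriv (deriv (deriv h)) x = -(lam * ρ x * h x) := by linarith
    rw [e1', e2']; ring
  have hcont : ContinuousOn g' (Set.Icc (0:ℝ) 1) :=
    (continuous_const.mul ((hf.continuous.mul hh.continuous).mul hρ)).neg.continuousOn
  have := intervalIntegral.integral_eq_sub_of_hasDerivAt key
    (hcont.intervalIntegrable_of_Icc (by norm_num))
  have h2 : (∫ x in (0:ℝ)..1, g' x)
      = -((z + lam) * ∫ ξ in (0:ℝ)..1, f ξ * h ξ * ρ ξ) := by
    rw [hg']
    rw [intervalIntegral.integral_neg, intervalIntegral.integral_const_mul]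
  linarith [this, h2]
end

section
/- Let b₁,…,bₙ > 0 and distinct positive reals z₁,…,zₙ. Define W(z) = Σᵢ bᵢ/(z − zᵢ) and Z(z) = Σᵢ cᵢ/(z − zᵢ) with cᵢ = Σⱼ bᵢbⱼ/(zᵢ + zⱼ). Then W(z)W(−z) + Z(z) + Z(−z) = 0 for all z not in {±zᵢ}. -/
theorem rational_WZ_identity (n : ℕ) (b z : Fin n → ℝ)
    (hb : ∀ i, 0 < b i) (hz : ∀ i, 0 < z i) (hdist : Function.Injective z)
    (W Z : ℝ → ℝ)
    (hW : ∀ x, W x = ∑ i, b i / (x - z i))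
    (hZ : ∀ x, Z x = ∑ i, (∑ j, b i * b j / (z i + z j)) / (x - z i)) :
    ∀ x : ℝ, (∀ i, x ≠ z i ∧ x ≠ -z i) →
      W x * W (-x) + Z x + Z (-x) = 0 := by
  intro x hx
  have h1 : ∀ i, x - z i ≠ 0 := fun i => sub_ne_zero.mpr (hx i).1
  have h2 : ∀ i, -x - z i ≠ 0 := fun i h => (hx i).2 (by linarith)
  have h3 : ∀ i j, z i + z j ≠ 0 := fun i j => ne_of_gt (add_pos (hz i) (hz j))
  rw [hW, hW, hZ, hZ]
  simp only [Finset.sum_div]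
  rw [Finset.sum_mul_sum]
  have hswap : (∑ i, ∑ j, b i * b j / (z i + z j) / (-x - z i))
      = ∑ i, ∑ j, b i * b j / (z i + z j) / (-x - z j) := by
    rw [Finset.sum_comm]
    apply Finset.sum_congr rfl; intro i _
    apply Finset.sum_congr rfl; intro j _
    ring
  rw [hswap]
  rw [← Finset.sum_add_distrib, ← Finset.sum_add_distrib]
  apply Finset.sum_eq_zero
  intro i _
  rw [← Finset.sum_add_distrib, ← Finset.sum_add_distrib]
  apply Finset.sum_eq_zero
  intro j _
  have a1 := h1 i
  have a2 := h2 j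
  have a3 := h3 i j
  field_simp
  ring
end

section
/- Given positive discrete measures dα = Σᵢ Aᵢ δ_{xᵢ}, dβ = Σⱼ Bⱼ δ_{yⱼ} on ℝ₊ with Aᵢ, Bⱼ > 0 and distinct positive points, the pairing ⟨p|q⟩ = Σᵢ,ⱼ p(xᵢ)q(yⱼ)AᵢBⱼ/(xᵢ + yⱼ) on polynomials of degree < n is nondegenerate in the sense that if ⟨p|q⟩ = 0 for all polynomials q of degree < n, then p vanishes at all points xᵢ. -/
theorem cauchy_pairing_nondegenerate (n : ℕ) (x y A B : Fin n → ℝ)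
    (hA : ∀ i, 0 < A i) (hB : ∀ j, 0 < B j)
    (hx : ∀ i, 0 < x i) (hy : ∀ j, 0 < y j)
    (hxd : Function.Injective x) (hyd : Function.Injective y)
    (p : Polynomial ℝ) (hp : p.degree < n)
    (hpq : ∀ q : Polynomial ℝ, q.degree < n →
      ∑ i, ∑ j, p.eval (x i) * q.eval (y j) * A i * B j / (x i + y j) = 0) :
    ∀ i, p.eval (x i) = 0 := by
  classical
  rcases Nat.eq_zero_or_pos n with rfl | hn
  · exact fun i => i.elim0
  have hd : ∀ i j, x i + y j ≠ 0 := fun i j => (add_pos (hx i) (hy j)).ne'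
  have hyinj : Set.InjOn y (Finset.univ : Finset (Fin n)) := fun a _ b _ h => hyd h
  -- Step 1: for each j, ∑ i, p(xᵢ) Aᵢ / (xᵢ + yⱼ) = 0
  have hS : ∀ j : Fin n, ∑ i, p.eval (x i) * A i / (x i + y j) = 0 := by
    intro j0
    set q := Lagrange.basis Finset.univ y j0 with hq
    have hqdeg : q.degree < n := by
      rw [hq, Lagrange.degree_basis hyinj (Finset.mem_univ j0), Finset.card_univ,
        Fintype.card_fin]
      exact_mod_cast Nat.pred_lt hn.ne'
    have h := hpq q hqdeg
    have hcol : ∀ i : Fin n, ∑ j, p.eval (x i) * q.eval (y j) * A i * B j / (x i + y j)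
        = p.eval (x i) * A i * B j0 / (x i + y j0) := by
      intro i
      rw [Finset.sum_eq_single j0]
      · rw [hq, Lagrange.eval_basis_self hyinj (Finset.mem_univ j0)]; ring
      · intro j _ hj
        rw [hq, Lagrange.eval_basis_of_ne (Ne.symm hj) (Finset.mem_univ j)]
        simp
      · simp
    rw [Finset.sum_congr rfl fun i _ => hcol i] at h
    have h2 : (∑ i, p.eval (x i) * A i / (x i + y j0)) * B j0 = 0 := by
      rw [Finset.sum_mul, ← h]
      exact Finset.sum_congr rfl fun i _ => by ring
    exact (mul_eq_zero.mp h2).resolve_right (hB j0).ne'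
  -- Step 2: the polynomial N vanishes at all yⱼ and has degree < n, hence is zero
  set N : Polynomial ℝ := ∑ i, Polynomial.C (p.eval (x i) * A i) *
      ∏ k ∈ Finset.univ.erase i, (Polynomial.X + Polynomial.C (x k)) with hN
  have hNeval : ∀ j, N.eval (y j) = 0 := by
    intro j
    have key : N.eval (y j) = (∑ i, p.eval (x i) * A i / (x i + y j)) *
        ∏ k, (x k + y j) := by
      rw [hN, Polynomial.eval_finset_sum, Finset.sum_mul]
      refine Finset.sum_congr rfl fun i _ => ?_
      rw [Polynomial.eval_mul, Polynomial.eval_C, Polynomial.eval_prod,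
        ← Finset.mul_prod_erase _ _ (Finset.mem_univ i)]
      rw [div_mul_eq_mul_div, mul_comm (x i + y j), mul_assoc,
        mul_div_assoc, mul_div_assoc, div_self (hd i j), mul_one]
      simp only [Polynomial.eval_add, Polynomial.eval_X, Polynomial.eval_C]
      rw [Finset.prod_congr rfl fun k _ => add_comm (y j) (x k), mul_assoc]
    rw [key, hS j, zero_mul]
  have hNdeg : N.natDegree < n := by
    have : N.natDegree ≤ n - 1 := by
      refine Polynomial.natDegree_sum_le_of_forall_le _ _ fun i _ => ?_
      refine le_trans (Polynomial.natDegree_mul_le) ?_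
      rw [Polynomial.natDegree_C, zero_add]
      have hm : (∏ k ∈ Finset.univ.erase i,
          (Polynomial.X + Polynomial.C (x k))).natDegree
          = ∑ k ∈ Finset.univ.erase i,
            (Polynomial.X + Polynomial.C (x k)).natDegree :=
        Polynomial.natDegree_prod _ _ fun k _ => (Polynomial.monic_X_add_C (x k)).ne_zero
      rw [hm]
      simp [Polynomial.natDegree_X_add_C, Finset.card_erase_of_mem]
    omega
  have hN0 : N = 0 := by
    refine Polynomial.eq_zero_of_natDegree_lt_card_of_eval_eq_zero N hyd hNeval ?_
    simpa using hNdeg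
  -- Step 3: evaluate N at -xᵢ
  intro i
  have h0 : N.eval (-(x i)) = 0 := by rw [hN0]; simp
  have hev : N.eval (-(x i)) = p.eval (x i) * A i *
      ∏ k ∈ Finset.univ.erase i, (-(x i) + x k) := by
    rw [hN, Polynomial.eval_finset_sum, Finset.sum_eq_single i]
    · rw [Polynomial.eval_mul, Polynomial.eval_C, Polynomial.eval_prod]
      simp
    · intro i' _ hi'
      rw [Polynomial.eval_mul, Polynomial.eval_prod]
      have : ∏ k ∈ Finset.univ.erase i', (Polynomial.X + Polynomial.C (x k)).eval (-(x i))
          = 0 := by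
        apply Finset.prod_eq_zero (Finset.mem_erase.mpr ⟨Ne.symm hi', Finset.mem_univ i⟩)
        simp
      rw [this, mul_zero]
    · simp
  rw [hev] at h0
  have hprod : ∏ k ∈ Finset.univ.erase i, (-(x i) + x k) ≠ 0 := by
    refine Finset.prod_ne_zero_iff.mpr fun k hk => ?_
    have hk' : k ≠ i := (Finset.mem_erase.mp hk).1
    intro h
    exact hk' (hxd (by linarith))
  have := mul_eq_zero.mp h0
  rcases this with h | h
  · rcases mul_eq_zero.mp h with h | h
    · exact h
    · exact absurd h (hA i).ne'
  · exact absurd h hprod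
end

section
/- For discrete measures dα = Σᵢ₌₁ⁿ Aᵢ δ_{xᵢ} and dβ = Σⱼ₌₁ⁿ Bⱼ δ_{yⱼ} with Aᵢ, Bⱼ > 0 and xᵢ, yⱼ distinct positive reals, there exist families of polynomials p₀,…,p_{n−1} and q₀,…,q_{n−1} with deg pⱼ = deg qⱼ = j such that ⟨pⱼ|q_k⟩ = δⱼₖ, where ⟨p|q⟩ = Σᵢ,ⱼ p(xᵢ)q(yⱼ)AᵢBⱼ/(xᵢ + yⱼ). -/
open Finset

theorem cauchy_det (m : ℕ) (u v : Fin m → ℝ) (h : ∀ i j, 0 < u i + v j) :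
    (Matrix.of fun i j => (u i + v j)⁻¹).det =
      (∏ i, ∏ j ∈ Finset.Ioi i, ((u j - u i) * (v j - v i))) / ∏ i, ∏ j, (u i + v j) := by
  induction m with
  | zero => simp [Matrix.det_fin_zero]
  | succ m ih =>
    -- reindex to Fin 1 ⊕ Fin m
    set e : Fin 1 ⊕ Fin m ≃ Fin (m + 1) := finSumFinEquiv.trans (finCongr (Nat.add_comm 1 m)) with he
    have he0 : e (Sum.inl 0) = 0 := by
      apply Fin.ext; simp [he]
    have hes : ∀ j : Fin m, e (Sum.inr j) = j.succ := by
      intro j; apply Fin.ext; simp [he, Nat.add_comm]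
    have a00pos := h 0 0
    set a00 : ℝ := u 0 + v 0 with ha00
    set M : Matrix (Fin (m+1)) (Fin (m+1)) ℝ := Matrix.of fun i j => (u i + v j)⁻¹ with hM
    set Ablock : Matrix (Fin 1) (Fin 1) ℝ := Matrix.of fun _ _ => a00⁻¹ with hA
    set Bblock : Matrix (Fin 1) (Fin m) ℝ := Matrix.of fun _ j => (u 0 + v j.succ)⁻¹ with hB
    set Cblock : Matrix (Fin m) (Fin 1) ℝ := Matrix.of fun i _ => (u i.succ + v 0)⁻¹ with hC
    set Dblock : Matrix (Fin m) (Fin m) ℝ := Matrix.of fun i j => (u i.succ + v j.succ)⁻¹ with hD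
    have hsub : M.submatrix e e = Matrix.fromBlocks Ablock Bblock Cblock Dblock := by
      ext i j
      cases i with
      | inl i =>
        cases j with
        | inl j =>
          simp [he0, hM, hA, ha00, Subsingleton.elim i 0, Subsingleton.elim j 0]
        | inr j => simp [he0, hes, hM, hB, Fin.ext_iff, Subsingleton.elim i 0]
      | inr i =>
        cases j with
        | inl j => simp [he0, hes, hM, hC, Subsingleton.elim j 0]
        | inr j => simp [hes, hM, hD]
    have hAinv : Ablock * Matrix.of (fun _ _ => a00) = 1 ∧
        (Matrix.of fun (_ _ : Fin 1) => a00) * Ablock = 1 := by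
      constructor <;>
      · ext i j
        simp [hA, Matrix.mul_apply, Fin.sum_univ_one, inv_mul_cancel₀ (ne_of_gt a00pos),
          mul_inv_cancel₀ (ne_of_gt a00pos), Subsingleton.elim i j, Matrix.one_apply]
    haveI : Invertible Ablock := ⟨Matrix.of fun _ _ => a00, hAinv.2, hAinv.1⟩
    have hdet1 : M.det = Ablock.det * (Dblock - Cblock * ⅟Ablock * Bblock).det := by
      rw [← Matrix.det_submatrix_equiv_self e M, hsub, Matrix.det_fromBlocks₁₁]
    have hinvA : (⅟Ablock : Matrix (Fin 1) (Fin 1) ℝ) = Matrix.of fun _ _ => a00 :=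
      invOf_eq_right_inv hAinv.1
    -- Schur complement entries
    have hSchur : Dblock - Cblock * ⅟Ablock * Bblock =
        Matrix.of fun i j => ((u i.succ - u 0) / (u i.succ + v 0)) *
          (((v j.succ - v 0) / (u 0 + v j.succ)) * (u i.succ + v j.succ)⁻¹) := by
      ext i j
      have h1 := h i.succ j.succ
      have h2 := h i.succ 0
      have h3 := h 0 j.succ
      simp only [hinvA, Matrix.sub_apply, Matrix.mul_apply, Fin.sum_univ_one, Matrix.of_apply,
        hD, hC, hB]
      field_simp
      try ring
    have hfact : Dblock - Cblock * ⅟Ablock * Bblock =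
        (Matrix.diagonal fun i : Fin m => (u i.succ - u 0) / (u i.succ + v 0)) *
        (Matrix.of fun i j : Fin m => (u i.succ + v j.succ)⁻¹) *
        (Matrix.diagonal fun j : Fin m => (v j.succ - v 0) / (u 0 + v j.succ)) := by
      rw [hSchur]; ext i j
      simp [Matrix.mul_apply, Matrix.diagonal, Finset.mul_sum, Finset.sum_ite_eq,
        Finset.sum_ite_eq']
      try ring
    have hih := ih (fun i => u i.succ) (fun j => v j.succ) (fun i j => h i.succ j.succ)
    have hdet : M.det = a00⁻¹ *
        ((∏ i : Fin m, (u i.succ - u 0) / (u i.succ + v 0)) *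
         ((∏ i : Fin m, ∏ j ∈ Ioi i, (u j.succ - u i.succ) * (v j.succ - v i.succ)) /
            ∏ i : Fin m, ∏ j : Fin m, (u i.succ + v j.succ)) *
         (∏ j : Fin m, (v j.succ - v 0) / (u 0 + v j.succ))) := by
      rw [hdet1, hfact, Matrix.det_mul, Matrix.det_mul, Matrix.det_diagonal,
        Matrix.det_diagonal, hih]
      rw [hA]
      rw [Matrix.det_fin_one]
      simp only [Matrix.of_apply]
      try ring
    rw [hdet]
    have hD1 : (∏ i : Fin (m + 1), ∏ j ∈ Ioi i, (u j - u i) * (v j - v i)) =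
        (∏ j : Fin m, (u j.succ - u 0) * (v j.succ - v 0)) *
        ∏ i : Fin m, ∏ j ∈ Ioi i, (u j.succ - u i.succ) * (v j.succ - v i.succ) := by
      rw [Fin.prod_univ_succ]
      rw [Fin.prod_Ioi_zero]
      congr 1
      exact Finset.prod_congr rfl fun i _ => Fin.prod_Ioi_succ _ _
    have hP : (∏ i : Fin (m + 1), ∏ j : Fin (m + 1), (u i + v j)) =
        (a00 * ∏ j : Fin m, (u 0 + v j.succ)) *
        ∏ i : Fin m, ((u i.succ + v 0) * ∏ j : Fin m, (u i.succ + v j.succ)) := by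
      rw [Fin.prod_univ_succ]
      congr 1
      · rw [Fin.prod_univ_succ]
      · exact Finset.prod_congr rfl fun i _ => Fin.prod_univ_succ _
    rw [hD1, hP]
    have h1 : (0:ℝ) < ∏ i : Fin m, ∏ j : Fin m, (u i.succ + v j.succ) :=
      Finset.prod_pos fun i _ => Finset.prod_pos fun j _ => h _ _
    have h2 : (0:ℝ) < ∏ i : Fin m, (u i.succ + v 0) :=
      Finset.prod_pos fun i _ => h _ _
    have h3 : (0:ℝ) < ∏ j : Fin m, (u 0 + v j.succ) :=
      Finset.prod_pos fun j _ => h _ _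
    rw [Finset.prod_div_distrib, Finset.prod_div_distrib, Finset.prod_mul_distrib,
      Finset.prod_mul_distrib]
    field_simp

lemma det_rows_expand {m nn : ℕ} (c : Fin m → Fin nn → ℝ) (N : Fin nn → Fin m → ℝ) :
    (Matrix.of fun r s => ∑ i, c r i * N i s).det
      = ∑ φ : Fin m → Fin nn, (∏ r, c r (φ r)) * (Matrix.of fun r s => N (φ r) s).det := by
  have h1 : (Matrix.of fun r s => ∑ i, c r i * N i s : Matrix (Fin m) (Fin m) ℝ)
      = fun r => ∑ i, c r i • N i := by
    ext r s; simp
  have h2 : ∀ M : Matrix (Fin m) (Fin m) ℝ, M.det = Matrix.detRowAlternating M := fun _ => rfl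
  rw [h2, h1]
  have h3 := (Matrix.detRowAlternating (R := ℝ) (n := Fin m)).toMultilinearMap.map_sum
    (g := fun r (i : Fin nn) => c r i • N i)
  simp only [AlternatingMap.coe_multilinearMap] at h3
  rw [h3]
  refine Finset.sum_congr rfl fun φ _ => ?_
  have h4 := (Matrix.detRowAlternating (R := ℝ) (n := Fin m)).toMultilinearMap.map_smul_univ
    (fun r => c r (φ r)) (fun r => N (φ r))
  simp only [AlternatingMap.coe_multilinearMap] at h4
  rw [h4, smul_eq_mul]
  rfl

lemma det_cols_expand {m nn : ℕ} (c : Fin m → Fin nn → ℝ) (N : Fin nn → Fin m → ℝ) :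
    (Matrix.of fun r s => ∑ l, c s l * N l r).det
      = ∑ ψ : Fin m → Fin nn, (∏ s, c s (ψ s)) * (Matrix.of fun r s => N (ψ s) r).det := by
  rw [← Matrix.det_transpose]
  have h1 : (Matrix.of fun r s => ∑ l, c s l * N l r).transpose
      = Matrix.of fun s r => ∑ l, c s l * N l r := rfl
  rw [h1, det_rows_expand]
  refine Finset.sum_congr rfl fun ψ _ => ?_
  congr 1
  rw [← Matrix.det_transpose]
  rfl

lemma sum_inj_group {m nn : ℕ} (F : (Fin m → Fin nn) → ℝ)
    (hz : ∀ φ, ¬ Function.Injective φ → F φ = 0) :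
    ∑ φ : Fin m → Fin nn, F φ
      = ∑ w ∈ Finset.univ.filter (fun w : Fin m → Fin nn => StrictMono w),
          ∑ σ : Equiv.Perm (Fin m), F (w ∘ σ) := by
  rw [← Finset.sum_filter_add_sum_filter_not Finset.univ (fun φ => Function.Injective φ) F]
  have h0 : ∑ φ ∈ Finset.univ.filter (fun φ => ¬ Function.Injective φ), F φ = 0 :=
    Finset.sum_eq_zero fun φ hφ => hz φ (Finset.mem_filter.mp hφ).2
  rw [h0, add_zero, ← Finset.sum_product']
  refine Finset.sum_bij' (fun φ _ => (φ ∘ Tuple.sort φ, (Tuple.sort φ)⁻¹))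
    (fun p _ => p.1 ∘ p.2) ?_ ?_ ?_ ?_ ?_
  · intro φ hφ
    simp only [Finset.mem_filter, Finset.mem_univ, true_and] at hφ
    simp only [Finset.mem_product, Finset.mem_filter, Finset.mem_univ, true_and, and_true]
    exact (Tuple.monotone_sort φ).strictMono_of_injective
      (hφ.comp (Tuple.sort φ).injective)
  · intro p hp
    simp only [Finset.mem_product, Finset.mem_filter, Finset.mem_univ, true_and] at hp ⊢
    exact hp.1.injective.comp p.2.injective
  · intro φ hφ
    funext r
    simp
  · intro p hp
    simp only [Finset.mem_product, Finset.mem_filter, Finset.mem_univ, true_and] at hp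
    have hw : StrictMono p.1 := hp.1
    have hws : StrictMono ((p.1 ∘ p.2) ∘ Tuple.sort (p.1 ∘ p.2)) := by
      refine (Tuple.monotone_sort _).strictMono_of_injective ?_
      exact ((hw.injective.comp p.2.injective).comp (Tuple.sort _).injective)
    have hrange : Set.range ((p.1 ∘ p.2) ∘ Tuple.sort (p.1 ∘ p.2)) = Set.range p.1 := by
      have e1 : Set.range ((p.1 ∘ ⇑p.2) ∘ ⇑(Tuple.sort (p.1 ∘ ⇑p.2)))
          = Set.range (p.1 ∘ ⇑p.2) := by
        rw [Set.range_comp, Equiv.range_eq_univ, Set.image_univ]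
      rw [e1, Set.range_comp, Equiv.range_eq_univ, Set.image_univ]
    haveI : WellFoundedLT (Fin m) := inferInstance
    have h1 : (p.1 ∘ p.2) ∘ Tuple.sort (p.1 ∘ p.2) = p.1 :=
      (hws.range_inj hw).mp hrange
    have h2 : (Tuple.sort (p.1 ∘ p.2))⁻¹ = p.2 := by
      have : ∀ r, p.1 (p.2 (Tuple.sort (p.1 ∘ p.2) r)) = p.1 r := fun r => congrFun h1 r
      have h3 : ∀ r, p.2 (Tuple.sort (p.1 ∘ p.2) r) = r := fun r => hw.injective (this r)
      ext r
      have h4 : p.2 r = (Tuple.sort (p.1 ∘ ⇑p.2))⁻¹ r := by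
        simpa using h3 ((Tuple.sort (p.1 ∘ ⇑p.2))⁻¹ r)
      exact congrArg Fin.val h4.symm
    exact Prod.ext h1 h2
  · intro φ hφ
    have : (φ ∘ Tuple.sort φ) ∘ ⇑(Tuple.sort φ)⁻¹ = φ := by
      funext r; simp
    rw [this]

lemma bimoment_det_pos {n : ℕ} (x y A B : Fin n → ℝ)
    (hA : ∀ i, 0 < A i) (hB : ∀ j, 0 < B j)
    (hx : ∀ i, 0 < x i) (hy : ∀ j, 0 < y j)
    (hxd : Function.Injective x) (hyd : Function.Injective y)
    (m : ℕ) (hm : m ≤ n) :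
    0 < (Matrix.of fun r s : Fin m =>
        ∑ i, ∑ l, A i * B l * x i ^ (r : ℕ) * y l ^ (s : ℕ) / (x i + y l)).det := by
  have hxy : ∀ i l, (0:ℝ) < x i + y l := fun i l => add_pos (hx i) (hy l)
  set D : (Fin m → Fin n) → (Fin m → Fin n) → ℝ :=
    fun φ ψ => (Matrix.of fun r s : Fin m => (x (φ r) + y (ψ s))⁻¹).det with hD
  set V : (Fin m → Fin n) → ℝ := fun ψ => ∏ s, B (ψ s) * y (ψ s) ^ (s:ℕ) with hV
  set SM := Finset.univ.filter (fun w : Fin m → Fin n => StrictMono w) with hSM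
  -- Step A : expansion
  have stepA : (Matrix.of fun r s : Fin m =>
        ∑ i, ∑ l, A i * B l * x i ^ (r : ℕ) * y l ^ (s : ℕ) / (x i + y l)).det
      = ∑ φ : Fin m → Fin n, (∏ r, A (φ r) * x (φ r) ^ (r:ℕ)) * (∑ ψ, V ψ * D φ ψ) := by
    have e1 : (Matrix.of fun r s : Fin m =>
          ∑ i, ∑ l, A i * B l * x i ^ (r : ℕ) * y l ^ (s : ℕ) / (x i + y l))
        = Matrix.of fun r s : Fin m => ∑ i, (A i * x i ^ (r:ℕ)) *
            (∑ l, (B l * y l ^ (s:ℕ)) * (x i + y l)⁻¹) := by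
      ext r s
      simp only [Matrix.of_apply]
      refine Finset.sum_congr rfl fun i _ => ?_
      rw [Finset.mul_sum]
      refine Finset.sum_congr rfl fun l _ => ?_
      rw [div_eq_mul_inv]; ring
    rw [e1, det_rows_expand (c := fun r i => A i * x i ^ (r:ℕ))
      (N := fun i s => ∑ l, (B l * y l ^ (s:ℕ)) * (x i + y l)⁻¹)]
    refine Finset.sum_congr rfl fun φ _ => ?_
    congr 1
    exact det_cols_expand (c := fun s l => B l * y l ^ (s:ℕ))
      (N := fun l r => (x (φ r) + y l)⁻¹)
  -- Step B : group rows
  have stepB : ∑ φ : Fin m → Fin n, (∏ r, A (φ r) * x (φ r) ^ (r:ℕ)) * (∑ ψ, V ψ * D φ ψ)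
      = ∑ w ∈ SM, (∏ r, A (w r)) * (Matrix.vandermonde fun r => x (w r)).det *
          (∑ ψ, V ψ * D w ψ) := by
    rw [sum_inj_group _ (fun φ hφ => ?_)]
    · refine Finset.sum_congr rfl fun w hw => ?_
      have hperm : ∀ σ : Equiv.Perm (Fin m), ∀ ψ, D (w ∘ σ) ψ = (Equiv.Perm.sign σ : ℤ) * D w ψ := by
        intro σ ψ
        have h1 : D (w ∘ σ) ψ
            = ((Matrix.of fun r s : Fin m => (x (w r) + y (ψ s))⁻¹).submatrix σ id).det := rfl
        have h2 : D w ψ = (Matrix.of fun r s : Fin m => (x (w r) + y (ψ s))⁻¹).det := rfl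
        rw [h1, h2, Matrix.det_permute]
        try norm_cast
      have e2 : ∀ σ : Equiv.Perm (Fin m),
          (∏ r, A ((w ∘ σ) r) * x ((w ∘ σ) r) ^ (r:ℕ)) * (∑ ψ, V ψ * D (w ∘ σ) ψ)
          = (∏ r, A (w r)) *
            ((Equiv.Perm.sign σ : ℤ) * ∏ r, x (w (σ r)) ^ (r:ℕ)) * (∑ ψ, V ψ * D w ψ) := by
        intro σ
        have eA : (∏ r, A ((w ∘ σ) r) * x ((w ∘ σ) r) ^ (r:ℕ))
            = (∏ r, A (w r)) * ∏ r, x (w (σ r)) ^ (r:ℕ) := by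
          rw [Finset.prod_mul_distrib]
          congr 1
          exact Equiv.prod_comp σ (fun r => A (w r))
        have eB : (∑ ψ, V ψ * D (w ∘ σ) ψ) = (Equiv.Perm.sign σ : ℤ) * ∑ ψ, V ψ * D w ψ := by
          rw [Finset.mul_sum]
          refine Finset.sum_congr rfl fun ψ _ => ?_
          rw [hperm σ ψ]; ring
        rw [eA, eB]; ring
      rw [Finset.sum_congr rfl (fun σ _ => e2 σ)]
      rw [← Finset.sum_mul, ← Finset.mul_sum]
      congr 2
      rw [Matrix.det_apply']
      rfl
    · -- non-injective φ gives zero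
      have : ∀ ψ, D φ ψ = 0 := by
        intro ψ
        obtain ⟨r1, r2, he, hne⟩ : ∃ r1 r2, φ r1 = φ r2 ∧ r1 ≠ r2 := by
          simp only [Function.Injective, not_forall] at hφ
          obtain ⟨a, b, h1, h2⟩ := hφ
          exact ⟨a, b, h1, h2⟩
        refine Matrix.det_zero_of_row_eq hne ?_
        funext s
        simp [he]
      simp [this]
  have stepC : ∀ w : Fin m → Fin n, (∑ ψ, V ψ * D w ψ)
      = ∑ w' ∈ SM, (∏ s, B (w' s)) * (Matrix.vandermonde fun s => y (w' s)).det * D w w' := by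
    intro w
    rw [sum_inj_group _ (fun ψ hψ => ?_)]
    · refine Finset.sum_congr rfl fun w' hw' => ?_
      have hperm : ∀ σ : Equiv.Perm (Fin m),
          D w (w' ∘ σ) = (Equiv.Perm.sign σ : ℤ) * D w w' := by
        intro σ
        have h1 : D w (w' ∘ σ)
            = ((Matrix.of fun r s : Fin m => (x (w r) + y (w' s))⁻¹).submatrix id σ).det := rfl
        have h2 : D w w' = (Matrix.of fun r s : Fin m => (x (w r) + y (w' s))⁻¹).det := rfl
        rw [h1, h2, Matrix.det_permute']
        try norm_cast
      have e2 : ∀ σ : Equiv.Perm (Fin m), V (w' ∘ σ) * D w (w' ∘ σ)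
          = (∏ s, B (w' s)) *
              ((Equiv.Perm.sign σ : ℤ) * ∏ s, y (w' (σ s)) ^ (s:ℕ)) * D w w' := by
        intro σ
        have eA : V (w' ∘ σ) = (∏ s, B (w' s)) * ∏ s, y (w' (σ s)) ^ (s:ℕ) := by
          rw [hV]
          simp only [Function.comp_apply]
          rw [Finset.prod_mul_distrib]
          congr 1
          exact Equiv.prod_comp σ (fun s => B (w' s))
        rw [eA, hperm σ]; ring
      rw [Finset.sum_congr rfl (fun σ _ => e2 σ)]
      rw [← Finset.sum_mul, ← Finset.mul_sum]
      congr 2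
      rw [Matrix.det_apply']
      rfl
    · have hz : D w ψ = 0 := by
        obtain ⟨s1, s2, he, hne⟩ : ∃ s1 s2, ψ s1 = ψ s2 ∧ s1 ≠ s2 := by
          simp only [Function.Injective, not_forall] at hψ
          obtain ⟨a, b, h1, h2⟩ := hψ
          exact ⟨a, b, h1, h2⟩
        refine Matrix.det_zero_of_column_eq hne fun k => ?_
        simp [he]
      simp [hz]
  rw [stepA, stepB]
  have final : ∑ w ∈ SM, (∏ r, A (w r)) * (Matrix.vandermonde fun r => x (w r)).det *
          (∑ ψ, V ψ * D w ψ)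
      = ∑ w ∈ SM, ∑ w' ∈ SM,
          (∏ r, A (w r)) * (Matrix.vandermonde fun r => x (w r)).det *
          ((∏ s, B (w' s)) * (Matrix.vandermonde fun s => y (w' s)).det * D w w') := by
    refine Finset.sum_congr rfl fun w _ => ?_
    rw [stepC w, Finset.mul_sum]
  rw [final]
  have hSMne : SM.Nonempty := by
    refine ⟨Fin.castLE hm, ?_⟩
    simp only [hSM, Finset.mem_filter, Finset.mem_univ, true_and]
    exact Fin.strictMono_castLE hm
  refine Finset.sum_pos (fun w hw => Finset.sum_pos (fun w' hw' => ?_) hSMne) hSMne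
  have hwmono : StrictMono w := by
    have := Finset.mem_filter.mp hw; exact this.2
  have hw'mono : StrictMono w' := by
    have := Finset.mem_filter.mp hw'; exact this.2
  have hDval : D w w' = ((∏ i, ∏ j ∈ Finset.Ioi i, (x (w j) - x (w i))) *
      (∏ i, ∏ j ∈ Finset.Ioi i, (y (w' j) - y (w' i)))) /
      ∏ i, ∏ j, (x (w i) + y (w' j)) := by
    have hc : (Matrix.of fun i j : Fin m => (x (w i) + y (w' j))⁻¹).det
        = (∏ i, ∏ j ∈ Finset.Ioi i, ((x (w j) - x (w i)) * (y (w' j) - y (w' i)))) /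
          ∏ i, ∏ j, (x (w i) + y (w' j)) :=
      cauchy_det m (fun r => x (w r)) (fun s => y (w' s)) (fun i j => hxy _ _)
    have hsplit : (∏ i, ∏ j ∈ Finset.Ioi i, ((x (w j) - x (w i)) * (y (w' j) - y (w' i))))
        = (∏ i, ∏ j ∈ Finset.Ioi i, (x (w j) - x (w i))) *
          (∏ i, ∏ j ∈ Finset.Ioi i, (y (w' j) - y (w' i))) := by
      rw [← Finset.prod_mul_distrib]
      exact Finset.prod_congr rfl fun i _ => Finset.prod_mul_distrib
    rw [show D w w' = (Matrix.of fun i j : Fin m => (x (w i) + y (w' j))⁻¹).det from rfl,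
      hc, hsplit]
  have hvx : (Matrix.vandermonde fun r => x (w r)).det
      = ∏ i, ∏ j ∈ Finset.Ioi i, (x (w j) - x (w i)) := Matrix.det_vandermonde _
  have hvy : (Matrix.vandermonde fun s => y (w' s)).det
      = ∏ i, ∏ j ∈ Finset.Ioi i, (y (w' j) - y (w' i)) := Matrix.det_vandermonde _
  set a := ∏ i, ∏ j ∈ Finset.Ioi i, (x (w j) - x (w i)) with ha
  set b := ∏ i, ∏ j ∈ Finset.Ioi i, (y (w' j) - y (w' i)) with hb
  set P := ∏ i, ∏ j, (x (w i) + y (w' j)) with hP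
  have hPpos : 0 < P := Finset.prod_pos fun i _ => Finset.prod_pos fun j _ => hxy _ _
  have hane : a ≠ 0 := by
    rw [ha]
    refine Finset.prod_ne_zero_iff.mpr fun i _ => Finset.prod_ne_zero_iff.mpr fun j hj => ?_
    have hij : i < j := Finset.mem_Ioi.mp hj
    exact sub_ne_zero.mpr fun hcon => (ne_of_lt hij) (hwmono.injective (hxd hcon)).symm
  have hbne : b ≠ 0 := by
    rw [hb]
    refine Finset.prod_ne_zero_iff.mpr fun i _ => Finset.prod_ne_zero_iff.mpr fun j hj => ?_
    have hij : i < j := Finset.mem_Ioi.mp hj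
    exact sub_ne_zero.mpr fun hcon => (ne_of_lt hij) (hw'mono.injective (hyd hcon)).symm
  rw [hvx, hvy, hDval]
  have hre : (∏ r, A (w r)) * a * ((∏ s, B (w' s)) * b * (a * b / P))
      = ((∏ r, A (w r)) * (∏ s, B (w' s))) * ((a * a) * (b * b) / P) := by
    ring
  rw [hre]
  have h1 : 0 < (∏ r, A (w r)) * (∏ s, B (w' s)) :=
    mul_pos (Finset.prod_pos fun r _ => hA _) (Finset.prod_pos fun s _ => hB _)
  have h2 : 0 < (a * a) * (b * b) / P :=
    div_pos (mul_pos (mul_self_pos.mpr hane) (mul_self_pos.mpr hbne)) hPpos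
  exact mul_pos h1 h2

lemma degree_fin_sum {m : ℕ} (e : Fin (m+1) → ℝ) (he : e (Fin.last m) ≠ 0) :
    (∑ r : Fin (m+1), Polynomial.C (e r) * Polynomial.X ^ (r:ℕ)).degree = (m : WithBot ℕ) := by
  have hle : (∑ r : Fin (m+1), Polynomial.C (e r) * Polynomial.X ^ (r:ℕ)).degree
      ≤ (m : WithBot ℕ) := by
    refine (Polynomial.degree_sum_le _ _).trans ?_
    refine Finset.sup_le fun r _ => ?_
    refine (Polynomial.degree_C_mul_X_pow_le _ _).trans ?_
    exact_mod_cast Nat.cast_le.mpr (Nat.lt_succ_iff.mp r.isLt)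
  have hco : (∑ r : Fin (m+1), Polynomial.C (e r) * Polynomial.X ^ (r:ℕ)).coeff m
      = e (Fin.last m) := by
    rw [Polynomial.finset_sum_coeff]
    rw [Finset.sum_eq_single (Fin.last m)]
    · rw [Polynomial.coeff_C_mul_X_pow]
      simp
    · intro r _ hr
      rw [Polynomial.coeff_C_mul_X_pow]
      have : ¬ (m = (r:ℕ)) := by
        intro hcon
        exact hr (Fin.ext (by simp [← hcon]))
      simp [this]
    · intro hcon
      exact absurd (Finset.mem_univ _) hcon
  exact Polynomial.degree_eq_of_le_of_coeff_ne_zero hle (hco ▸ he)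

lemma eval_fin_sum {m : ℕ} (e : Fin (m+1) → ℝ) (t : ℝ) :
    (∑ r : Fin (m+1), Polynomial.C (e r) * Polynomial.X ^ (r:ℕ)).eval t
      = ∑ r : Fin (m+1), e r * t ^ (r:ℕ) := by
  rw [Polynomial.eval_finset_sum]
  simp

lemma quad_swap {n : ℕ} (x y A B : Fin n → ℝ) {mj mk : ℕ} (cc : Fin mj → ℝ)
    (dd : Fin mk → ℝ) :
    (∑ i, ∑ l, (∑ r : Fin mj, cc r * x i ^ (r:ℕ)) * (∑ s : Fin mk, dd s * y l ^ (s:ℕ))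
        * A i * B l / (x i + y l))
      = ∑ r : Fin mj, ∑ s : Fin mk, cc r * dd s *
          (∑ i, ∑ l, A i * B l * x i ^ (r:ℕ) * y l ^ (s:ℕ) / (x i + y l)) := by
  have hE : ∀ i l, (∑ r : Fin mj, cc r * x i ^ (r:ℕ)) * (∑ s : Fin mk, dd s * y l ^ (s:ℕ))
        * A i * B l / (x i + y l)
      = ∑ r : Fin mj, ∑ s : Fin mk,
          cc r * dd s * (A i * B l * x i ^ (r:ℕ) * y l ^ (s:ℕ) / (x i + y l)) := by
    intro i l
    rw [Finset.sum_mul_sum]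
    simp only [Finset.sum_mul, Finset.sum_div]
    refine Finset.sum_congr rfl fun r _ => Finset.sum_congr rfl fun s _ => ?_
    ring
  calc (∑ i, ∑ l, (∑ r : Fin mj, cc r * x i ^ (r:ℕ)) * (∑ s : Fin mk, dd s * y l ^ (s:ℕ))
        * A i * B l / (x i + y l))
      = ∑ i, ∑ l, ∑ r : Fin mj, ∑ s : Fin mk,
          cc r * dd s * (A i * B l * x i ^ (r:ℕ) * y l ^ (s:ℕ) / (x i + y l)) := by
        exact Finset.sum_congr rfl fun i _ => Finset.sum_congr rfl fun l _ => hE i l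
    _ = ∑ i, ∑ r : Fin mj, ∑ l, ∑ s : Fin mk,
          cc r * dd s * (A i * B l * x i ^ (r:ℕ) * y l ^ (s:ℕ) / (x i + y l)) := by
        exact Finset.sum_congr rfl fun i _ => Finset.sum_comm
    _ = ∑ r : Fin mj, ∑ i, ∑ l, ∑ s : Fin mk,
          cc r * dd s * (A i * B l * x i ^ (r:ℕ) * y l ^ (s:ℕ) / (x i + y l)) := by
        exact Finset.sum_comm
    _ = ∑ r : Fin mj, ∑ i, ∑ s : Fin mk, ∑ l,
          cc r * dd s * (A i * B l * x i ^ (r:ℕ) * y l ^ (s:ℕ) / (x i + y l)) := by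
        exact Finset.sum_congr rfl fun r _ => Finset.sum_congr rfl fun i _ => Finset.sum_comm
    _ = ∑ r : Fin mj, ∑ s : Fin mk, ∑ i, ∑ l,
          cc r * dd s * (A i * B l * x i ^ (r:ℕ) * y l ^ (s:ℕ) / (x i + y l)) := by
        exact Finset.sum_congr rfl fun r _ => Finset.sum_comm
    _ = ∑ r : Fin mj, ∑ s : Fin mk, cc r * dd s *
          (∑ i, ∑ l, A i * B l * x i ^ (r:ℕ) * y l ^ (s:ℕ) / (x i + y l)) := by
        refine Finset.sum_congr rfl fun r _ => Finset.sum_congr rfl fun s _ => ?_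
        rw [Finset.mul_sum]
        exact Finset.sum_congr rfl fun i _ => by rw [Finset.mul_sum]

set_option maxHeartbeats 2000000 in
theorem cauchy_biorthogonal_polynomials_exist (n : ℕ) (x y A B : Fin n → ℝ)
    (hA : ∀ i, 0 < A i) (hB : ∀ j, 0 < B j)
    (hx : ∀ i, 0 < x i) (hy : ∀ j, 0 < y j)
    (hxd : Function.Injective x) (hyd : Function.Injective y) :
    ∃ p q : Fin n → Polynomial ℝ,
      (∀ j, (p j).degree = (j : ℕ)) ∧ (∀ j, (q j).degree = (j : ℕ)) ∧
      (∀ j k, ∑ i, ∑ l, (p j).eval (x i) * (q k).eval (y l) * A i * B l / (x i + y l)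
        = if j = k then 1 else 0) := by
  classical
  set Ifun : ℕ → ℕ → ℝ :=
    fun r s => ∑ i, ∑ l, A i * B l * x i ^ r * y l ^ s / (x i + y l) with hIfun
  have hdetpos : ∀ m : ℕ, m ≤ n →
      0 < (Matrix.of fun r s : Fin m => Ifun (r:ℕ) (s:ℕ)).det := by
    intro m hm
    exact bimoment_det_pos x y A B hA hB hx hy hxd hyd m hm
  have key : ∀ j : Fin n, ∃ (c d : Fin ((j:ℕ)+1) → ℝ) (γ : ℝ),
      c (Fin.last (j:ℕ)) ≠ 0 ∧ d (Fin.last (j:ℕ)) = 1 ∧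
      (∀ s : Fin ((j:ℕ)+1), (∑ r : Fin ((j:ℕ)+1), c r * Ifun (r:ℕ) (s:ℕ)) =
        if (s:ℕ) = (j:ℕ) then 1 else 0) ∧
      (∀ r : Fin ((j:ℕ)+1), (∑ s : Fin ((j:ℕ)+1), Ifun (r:ℕ) (s:ℕ) * d s) =
        if (r:ℕ) = (j:ℕ) then γ else 0) := by
    intro j
    have hm : (j:ℕ)+1 ≤ n := j.isLt
    set Hj : Matrix (Fin ((j:ℕ)+1)) (Fin ((j:ℕ)+1)) ℝ :=
      Matrix.of fun r s => Ifun (r:ℕ) (s:ℕ) with hHj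
    have hdet : Hj.det ≠ 0 := ne_of_gt (hdetpos _ hm)
    -- the (last,last) entry of the inverse is positive
    have hadj : Hj.adjugate (Fin.last (j:ℕ)) (Fin.last (j:ℕ))
        = (Matrix.of fun r s : Fin (j:ℕ) => Ifun (r:ℕ) (s:ℕ)).det := by
      rw [Matrix.adjugate_apply, Matrix.det_succ_row _ (Fin.last (j:ℕ))]
      rw [Finset.sum_eq_single (Fin.last (j:ℕ))]
      · have hrow : (Hj.updateRow (Fin.last (j:ℕ)) (Pi.single (Fin.last (j:ℕ)) 1))
            (Fin.last (j:ℕ)) (Fin.last (j:ℕ)) = 1 := by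
          rw [Matrix.updateRow_self]
          simp
        have hminor : (Hj.updateRow (Fin.last (j:ℕ)) (Pi.single (Fin.last (j:ℕ)) 1)).submatrix
            (Fin.last (j:ℕ)).succAbove (Fin.last (j:ℕ)).succAbove
            = Matrix.of fun r s : Fin (j:ℕ) => Ifun (r:ℕ) (s:ℕ) := by
          ext r s
          rw [Matrix.submatrix_apply, Fin.succAbove_last,
            Matrix.updateRow_ne (Fin.castSucc_lt_last r).ne]
          simp [hHj]
        rw [hrow, hminor]
        have : (-1 : ℝ) ^ (((Fin.last (j:ℕ)) : ℕ) + ((Fin.last (j:ℕ)) : ℕ)) = 1 :=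
          Even.neg_one_pow ⟨(j:ℕ), rfl⟩
        rw [this]; ring
      · intro b _ hb
        rw [Matrix.updateRow_self, Pi.single_eq_of_ne hb]
        ring
      · intro hcon
        exact absurd (Finset.mem_univ _) hcon
    have hllpos : 0 < Hj⁻¹ (Fin.last (j:ℕ)) (Fin.last (j:ℕ)) := by
      rw [Matrix.inv_def, Matrix.smul_apply, hadj, Ring.inverse_eq_inv', smul_eq_mul]
      exact mul_pos (inv_pos.mpr (hdetpos _ hm)) (hdetpos _ (le_of_lt j.isLt))
    set ll := Hj⁻¹ (Fin.last (j:ℕ)) (Fin.last (j:ℕ)) with hll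
    refine ⟨fun r => Hj⁻¹ (Fin.last (j:ℕ)) r, fun s => Hj⁻¹ s (Fin.last (j:ℕ)) / ll,
      ll⁻¹, ne_of_gt hllpos, div_self (ne_of_gt hllpos), ?_, ?_⟩
    · intro s
      have h2 := congrFun (congrFun (Matrix.nonsing_inv_mul Hj (isUnit_iff_ne_zero.mpr hdet)) (Fin.last (j:ℕ))) s
      rw [Matrix.mul_apply] at h2
      rw [show (∑ r : Fin ((j:ℕ)+1), Hj⁻¹ (Fin.last (j:ℕ)) r * Ifun (r:ℕ) (s:ℕ))
          = ∑ r : Fin ((j:ℕ)+1), Hj⁻¹ (Fin.last (j:ℕ)) r * Hj r s from rfl, h2,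
          Matrix.one_apply]
      by_cases hs : (s:ℕ) = (j:ℕ)
      · have hlast : Fin.last (j:ℕ) = s := by
          apply Fin.ext; simp [hs]
        rw [if_pos hlast, if_pos hs]
      · have hlast : ¬ (Fin.last (j:ℕ) = s) := by
          intro hcon; apply hs; rw [← hcon]; simp
        rw [if_neg hlast, if_neg hs]
    · intro r
      have h2 := congrFun (congrFun (Matrix.mul_nonsing_inv Hj (isUnit_iff_ne_zero.mpr hdet)) r) (Fin.last (j:ℕ))
      rw [Matrix.mul_apply] at h2
      have h3 : (∑ s : Fin ((j:ℕ)+1), Ifun (r:ℕ) (s:ℕ) * (Hj⁻¹ s (Fin.last (j:ℕ)) / ll))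
          = (∑ s : Fin ((j:ℕ)+1), Hj r s * Hj⁻¹ s (Fin.last (j:ℕ))) / ll := by
        rw [Finset.sum_div]
        refine Finset.sum_congr rfl fun s _ => ?_
        rw [mul_div_assoc]
        rfl
      rw [h3, h2, Matrix.one_apply]
      by_cases hr : (r:ℕ) = (j:ℕ)
      · have hlast : r = Fin.last (j:ℕ) := by
          apply Fin.ext; simp [hr]
        rw [if_pos hlast, if_pos hr, one_div]
      · have hlast : ¬ (r = Fin.last (j:ℕ)) := by
          intro hcon; apply hr; rw [hcon]; simp
        rw [if_neg hlast, if_neg hr, zero_div]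
  choose c d γ hclast hdlast hcI hId using key
  refine ⟨fun j => ∑ r : Fin ((j:ℕ)+1), Polynomial.C (c j r) * Polynomial.X ^ (r:ℕ),
          fun j => ∑ s : Fin ((j:ℕ)+1), Polynomial.C (d j s) * Polynomial.X ^ (s:ℕ),
          fun j => degree_fin_sum (c j) (hclast j),
          fun j => degree_fin_sum (d j) (by rw [hdlast j]; exact one_ne_zero),
          ?_⟩
  intro j k
  have heval : (∑ i, ∑ l,
        (∑ r : Fin ((j:ℕ)+1), Polynomial.C (c j r) * Polynomial.X ^ (r:ℕ)).eval (x i) *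
        (∑ s : Fin ((k:ℕ)+1), Polynomial.C (d k s) * Polynomial.X ^ (s:ℕ)).eval (y l) *
        A i * B l / (x i + y l))
      = ∑ r : Fin ((j:ℕ)+1), ∑ s : Fin ((k:ℕ)+1), c j r * d k s * Ifun (r:ℕ) (s:ℕ) := by
    calc (∑ i, ∑ l,
        (∑ r : Fin ((j:ℕ)+1), Polynomial.C (c j r) * Polynomial.X ^ (r:ℕ)).eval (x i) *
        (∑ s : Fin ((k:ℕ)+1), Polynomial.C (d k s) * Polynomial.X ^ (s:ℕ)).eval (y l) *
        A i * B l / (x i + y l))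
        = ∑ i, ∑ l, (∑ r : Fin ((j:ℕ)+1), c j r * x i ^ (r:ℕ)) *
            (∑ s : Fin ((k:ℕ)+1), d k s * y l ^ (s:ℕ)) * A i * B l / (x i + y l) := by
          refine Finset.sum_congr rfl fun i _ => Finset.sum_congr rfl fun l _ => ?_
          rw [eval_fin_sum, eval_fin_sum]
      _ = ∑ r : Fin ((j:ℕ)+1), ∑ s : Fin ((k:ℕ)+1), c j r * d k s *
            (∑ i, ∑ l, A i * B l * x i ^ (r:ℕ) * y l ^ (s:ℕ) / (x i + y l)) :=
          quad_swap x y A B (c j) (d k)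
      _ = ∑ r : Fin ((j:ℕ)+1), ∑ s : Fin ((k:ℕ)+1), c j r * d k s * Ifun (r:ℕ) (s:ℕ) := rfl
  rw [heval]
  by_cases hjk : j = k
  · subst hjk
    rw [if_pos rfl, Finset.sum_comm]
    have h1 : ∀ s : Fin ((j:ℕ)+1),
        (∑ r : Fin ((j:ℕ)+1), c j r * d j s * Ifun (r:ℕ) (s:ℕ))
          = d j s * (if (s:ℕ) = (j:ℕ) then 1 else 0) := by
      intro s
      rw [← hcI j s, Finset.mul_sum]
      exact Finset.sum_congr rfl fun r _ => by ring
    rw [Finset.sum_congr rfl fun s _ => h1 s]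
    rw [Finset.sum_eq_single (Fin.last (j:ℕ))]
    · simp [hdlast j]
    · intro s _ hs
      have hsv : ¬((s:ℕ) = (j:ℕ)) := fun hcon => hs (Fin.ext (by simp [hcon]))
      simp [hsv]
    · intro hcon; exact absurd (Finset.mem_univ _) hcon
  · rw [if_neg hjk]
    have hvne : (j:ℕ) ≠ (k:ℕ) := fun h => hjk (Fin.ext h)
    rcases hvne.lt_or_gt with hlt | hlt
    · refine Finset.sum_eq_zero fun r _ => ?_
      have h2 : (∑ s : Fin ((k:ℕ)+1), c j r * d k s * Ifun (r:ℕ) (s:ℕ))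
          = c j r * ∑ s : Fin ((k:ℕ)+1), Ifun (r:ℕ) (s:ℕ) * d k s := by
        rw [Finset.mul_sum]
        exact Finset.sum_congr rfl fun s _ => by ring
      have hrlt : (r:ℕ) < (k:ℕ)+1 := by
        have := r.isLt; omega
      have h3 : (∑ s : Fin ((k:ℕ)+1), Ifun (r:ℕ) (s:ℕ) * d k s)
          = if (r:ℕ) = (k:ℕ) then γ k else 0 := hId k ⟨(r:ℕ), hrlt⟩
      have hrne : ¬((r:ℕ) = (k:ℕ)) := by
        have := r.isLt; omega
      rw [h2, h3, if_neg hrne, mul_zero]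
    · rw [Finset.sum_comm]
      refine Finset.sum_eq_zero fun s _ => ?_
      have h2 : (∑ r : Fin ((j:ℕ)+1), c j r * d k s * Ifun (r:ℕ) (s:ℕ))
          = d k s * ∑ r : Fin ((j:ℕ)+1), c j r * Ifun (r:ℕ) (s:ℕ) := by
        rw [Finset.mul_sum]
        exact Finset.sum_congr rfl fun r _ => by ring
      have hslt : (s:ℕ) < (j:ℕ)+1 := by
        have := s.isLt; omega
      have h3 : (∑ r : Fin ((j:ℕ)+1), c j r * Ifun (r:ℕ) (s:ℕ))
          = if (s:ℕ) = (j:ℕ) then 1 else 0 := hcI j ⟨(s:ℕ), hslt⟩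
      have hsne : ¬((s:ℕ) = (j:ℕ)) := by
        have := s.isLt; omega
      rw [h2, h3, if_neg hsne, mul_zero]
end

section
/- Let p(z) and r(z) be real polynomials with deg p = n−1, deg r = n, all roots of r simple, positive, and interlacing with the n−1 simple positive roots of p, and p, r positive at 0. Then the partial fraction decomposition p(z)/r(z) = Σᵢ bᵢ/(z − zᵢ) over the roots zᵢ of r has all residues bᵢ of the same sign. -/
theorem interlacing_residues_same_sign (n : ℕ) (z : Fin (n + 1) → ℝ) (w : Fin n → ℝ)
    (pc rc : ℝ) (hpc : pc ≠ 0) (hrc : rc ≠ 0)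
    (p r : Polynomial ℝ)
    (hr : r = Polynomial.C rc * ∏ i : Fin (n + 1), (Polynomial.X - Polynomial.C (z i)))
    (hp : p = Polynomial.C pc * ∏ i : Fin n, (Polynomial.X - Polynomial.C (w i)))
    (hzmono : StrictMono z) (hz0 : 0 < z 0)
    (hinter : ∀ i : Fin n, z i.castSucc < w i ∧ w i < z i.succ)
    (hp0 : 0 < p.eval 0) (hr0 : 0 < r.eval 0)
    (b : Fin (n + 1) → ℝ)
    (hb : ∀ i, b i = p.eval (z i) / r.derivative.eval (z i)) :
    ∀ i j, 0 < b i * b j := by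
  have key : ∀ i : Fin (n + 1), 0 < b i * (rc / pc) := by
    intro i
    set A : ℝ := ∏ j : Fin n, (z i - w j) with hAdef
    set B : ℝ := ∏ j : Fin n, (z i - z (i.succAbove j)) with hBdef
    have hAB : 0 < A * B := by
      rw [hAdef, hBdef, ← Finset.prod_mul_distrib]
      apply Finset.prod_pos
      intro j _
      rcases lt_or_ge (j : ℕ) (i : ℕ) with h | h
      · have hsa : i.succAbove j = j.castSucc :=
          Fin.succAbove_of_castSucc_lt _ _ (by simpa [Fin.lt_def] using h)
        have h1 : w j < z i := by
          have : z j.succ ≤ z i := hzmono.monotone (by simp [Fin.le_def]; omega)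
          exact lt_of_lt_of_le (hinter j).2 this
        have h2 : z (i.succAbove j) < z i := by
          rw [hsa]; exact hzmono (by simpa [Fin.lt_def] using h)
        exact mul_pos (sub_pos.2 h1) (sub_pos.2 h2)
      · have hsa : i.succAbove j = j.succ :=
          Fin.succAbove_of_le_castSucc _ _ (by simp [Fin.le_def]; omega)
        have h1 : z i < w j := by
          have : z i ≤ z j.castSucc := hzmono.monotone (by simp [Fin.le_def]; omega)
          exact lt_of_le_of_lt this (hinter j).1
        have h2 : z i < z (i.succAbove j) := by
          rw [hsa]; exact hzmono (by simp [Fin.lt_def]; omega)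
        exact mul_pos_of_neg_of_neg (sub_neg.2 h1) (sub_neg.2 h2)
    have hB : B ≠ 0 := by
      intro h
      rw [h, mul_zero] at hAB
      exact lt_irrefl 0 hAB
    have hpz : p.eval (z i) = pc * A := by
      rw [hp]; simp [Polynomial.eval_prod, hAdef]
    have hrz : r.derivative.eval (z i) = rc * B := by
      rw [hr, Fin.prod_univ_succAbove (fun k => Polynomial.X - Polynomial.C (z k)) i]
      simp [Polynomial.derivative_mul, Polynomial.eval_prod, hBdef, mul_comm]
    have hbi : b i * (rc / pc) = (A * B) / B ^ 2 := by
      rw [hb, hpz, hrz]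
      field_simp
    rw [hbi]
    exact div_pos hAB (by positivity)
  intro i j
  have hc : rc / pc ≠ 0 := div_ne_zero hrc hpc
  have : b i * b j = ((b i * (rc / pc)) * (b j * (rc / pc))) / (rc / pc) ^ 2 := by
    field_simp
  rw [this]
  exact div_pos (mul_pos (key i) (key j)) (by positivity)
end
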